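/- Let T be the weighted shift on l² with positive weights (a_j). If both T and its mean transform M(T) (the weighted shift with weights (a_j + a_{j+1})/2) are 2-isometries, then T is an isometry (a_j = 1 for all j); in particular T = Δ(T) = M(T). -/

import Mathlib

noncomputable section

/-- The Hilbert space `ℓ²(ℕ, ℂ)`. -/
abbrev Ell2 := lp (fun _ : ℕ => ℂ) 2

/-- The canonical orthonormal basis of `ℓ²` (indexed from `0`; the paper's index `j ≥ 1`
corresponds to our index `j - 1`). -/
noncomputable def e (j : ℕ) : Ell2 := lp.single 2 j 1

/-- `T` is an `m`-isometry: `∑_{k=0}^m (-1)^k C(m,k) ‖T^k x‖² = 0` for all `x`. -/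
def IsMIsometry (T : Ell2 →L[ℂ] Ell2) (m : ℕ) : Prop :=
  ∀ x : Ell2,
    ∑ k ∈ Finset.range (m + 1), (-1 : ℝ) ^ k * (m.choose k : ℝ) * ‖(T ^ k) x‖ ^ 2 = 0

/-!
Writing `s j = a_j²`, a weighted shift is a 2-isometry iff `s (j+1) s j - 2 s j + 1 = 0`, that is
`(s (j+1) - 1)⁻¹ = (s j - 1)⁻¹ + 1`; positivity then forces `s ≡ 1` or `s j = 1 + (c + j)⁻¹` with
`c > 0`. If `T` were not an isometry, then `a_j² = 1 + (c + j)⁻¹` and, for the mean transform,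
`((a_j + a_{j+1})/2)² = 1 + (d + j)⁻¹`. AM-GM at `j = 0` gives `d < c + 1/2`, whereas
`((a + b)/2)² ≤ (a² + b²)/2` at every `j` bounds `d + j` below by the harmonic mean
`c + j + 1/2 - (4(c + j) + 2)⁻¹` of `c + j` and `c + j + 1`, so `d ≥ c + 1/2`.
-/

theorem norm_e (j : ℕ) : ‖e j‖ = 1 := by
  simp [e, lp.norm_single]

theorem orthonormal_e : Orthonormal ℂ e := by
  rw [orthonormal_iff_ite]
  intro i j
  simp [e, lp.inner_single_left, lp.single_apply, Pi.single_apply]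

theorem ext_e {F : Type*} [AddCommMonoid F] [Module ℂ F] [TopologicalSpace F] [T2Space F]
    {S₁ S₂ : Ell2 →L[ℂ] F} (h : ∀ j, S₁ (e j) = S₂ (e j)) : S₁ = S₂ :=
  lp.ext_continuousLinearMap (by norm_num) fun j =>
    ContinuousLinearMap.ext_ring (by simpa [e] using h j)

theorem norm_map_of_apply_e_eq_e_succ {T : Ell2 →L[ℂ] Ell2} (hT : ∀ j, T (e j) = e (j + 1))
    (x : Ell2) : ‖T x‖ = ‖x‖ := by
  have hV := (orthonormal_e.comp _ (add_left_injective 1)).orthogonalFamily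
  have : T = hV.linearIsometry.toContinuousLinearMap := ext_e fun j => by
    rw [hT]
    simp [e]
  rw [this]
  exact hV.linearIsometry.norm_map x

/-- The 2-isometry condition for a weighted shift, written for the squared weights `s j = a_j²`. -/
def IsTwoIsometricSeq (s : ℕ → ℝ) : Prop :=
  ∀ j, s (j + 1) * s j - 2 * s j + 1 = 0

namespace IsTwoIsometricSeq

variable {s : ℕ → ℝ}

theorem ne_zero (hs : IsTwoIsometricSeq s) (j : ℕ) : s j ≠ 0 := fun h0 => by
  simpa [h0] using hs j

theorem sub_one_succ (hs : IsTwoIsometricSeq s) (j : ℕ) :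
    s (j + 1) - 1 = (s j - 1) / s j := by
  have := hs.ne_zero j
  field_simp
  linear_combination hs j

theorem succ_eq_one_iff (hs : IsTwoIsometricSeq s) (j : ℕ) : s (j + 1) = 1 ↔ s j = 1 := by
  rw [← sub_eq_zero, hs.sub_one_succ, div_eq_zero_iff, sub_eq_zero]
  simp [hs.ne_zero j]

theorem inv_sub_one_succ (hs : IsTwoIsometricSeq s) {j : ℕ} (hj : s j ≠ 1) :
    (s (j + 1) - 1)⁻¹ = (s j - 1)⁻¹ + 1 := by
  have hj' : s j - 1 ≠ 0 := sub_ne_zero.mpr hj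
  rw [hs.sub_one_succ, inv_div]
  field_simp
  ring

theorem inv_sub_one_eq (hs : IsTwoIsometricSeq s) (h0 : s 0 ≠ 1) (j : ℕ) :
    s j ≠ 1 ∧ (s j - 1)⁻¹ = (s 0 - 1)⁻¹ + j := by
  induction j with
  | zero => simpa using h0
  | succ j ih =>
    rw [Ne, hs.succ_eq_one_iff, hs.inv_sub_one_succ ih.1, ih.2]
    exact ⟨ih.1, by push_cast; ring⟩

theorem eq_one_or_eq_one_add_inv (hs : IsTwoIsometricSeq s) (hpos : ∀ j, 0 < s j) :
    (∀ j, s j = 1) ∨ ∃ c : ℝ, 0 < c ∧ ∀ j, s j = 1 + (c + j)⁻¹ := by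
  by_cases h0 : s 0 = 1
  · left
    intro j
    induction j with
    | zero => exact h0
    | succ j ih => exact (hs.succ_eq_one_iff j).mpr ih
  right
  set c := (s 0 - 1)⁻¹
  have key := hs.inv_sub_one_eq h0
  refine ⟨c, ?_, fun j => ?_⟩
  · by_contra! hc
    -- `c + n ∈ (-1, 0]` for `n = ⌊-c⌋₊`, whereas `(s n - 1)⁻¹` avoids `(-1, 0]` since `s n > 0`.
    set n := ⌊-c⌋₊
    have hn_le : (n : ℝ) ≤ -c := Nat.floor_le (by linarith)
    have hn_gt : -c < n + 1 := Nat.lt_floor_add_one _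
    obtain ⟨hne, hinv⟩ := key n
    have hmul : (s n - 1) * (c + n) = 1 := by
      rw [← hinv, mul_inv_cancel₀ (sub_ne_zero.mpr hne)]
    have := hpos n
    nlinarith
  · rw [← (key j).2, inv_inv]
    ring

end IsTwoIsometricSeq

theorem IsMIsometry.isTwoIsometricSeq_sq {T : Ell2 →L[ℂ] Ell2} {w : ℕ → ℝ}
    (hT : ∀ j, T (e j) = ((w j : ℝ) : ℂ) • e (j + 1)) (h2 : IsMIsometry T 2) :
    IsTwoIsometricSeq fun j => w j ^ 2 := by
  have hnorm (j : ℕ) : ‖T (e j)‖ = |w j| := by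
    rw [hT, norm_smul, Complex.norm_real, norm_e, mul_one, Real.norm_eq_abs]
  intro j
  have hnorm2 : ‖T (T (e j))‖ = |w j| * |w (j + 1)| := by
    rw [hT, map_smul, norm_smul, Complex.norm_real, hnorm, Real.norm_eq_abs]
  have := h2 (e j)
  norm_num [Finset.sum_range_succ, hnorm, hnorm2, norm_e, mul_pow] at this
  linear_combination this

theorem lt_add_half_of_mul_le_sq {c d : ℝ} (hc : 0 < c) (hd : 0 < d)
    (h : (1 + c⁻¹) * (1 + (c + 1)⁻¹) ≤ (1 + d⁻¹) ^ 2) : d < c + 1 / 2 := by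
  by_contra! hle
  have hinv : d⁻¹ ≤ (c + 1 / 2)⁻¹ := inv_anti₀ (by positivity) hle
  have hprod : (1 + c⁻¹) * (1 + (c + 1)⁻¹) = (c + 2) / c := by field_simp; ring
  have hbound : 1 + (c + 1 / 2)⁻¹ = (2 * c + 3) / (2 * c + 1) := by field_simp; ring
  -- `c (2c + 3)² + 2 = (c + 2) (2c + 1)²`
  have hsq : ((2 * c + 3) / (2 * c + 1)) ^ 2 < (c + 2) / c := by
    rw [div_pow, div_lt_div_iff₀ (by positivity) hc]
    nlinarith
  have : (1 + d⁻¹) ^ 2 ≤ (1 + (c + 1 / 2)⁻¹) ^ 2 := by gcongr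
  rw [hbound] at this
  rw [hprod] at h
  linarith

theorem add_half_sub_le_of_le_avg {x y : ℝ} (hx : 0 < x) (hy : 0 < y)
    (h : 1 + y⁻¹ ≤ ((1 + x⁻¹) + (1 + (x + 1)⁻¹)) / 2) : x + 1 / 2 - y ≤ (4 * x + 2)⁻¹ := by
  have hy' : 2 * x * (x + 1) / (2 * x + 1) ≤ y := by
    have : y⁻¹ ≤ (2 * x * (x + 1) / (2 * x + 1))⁻¹ := by
      rw [inv_div]; field_simp at h ⊢; linarith
    exact (inv_le_inv₀ hy (by positivity)).mp this
  have : x + 1 / 2 - 2 * x * (x + 1) / (2 * x + 1) = (4 * x + 2)⁻¹ := by field_simp; ring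
  linarith

theorem add_half_le_of_forall_le_avg {c d : ℝ} (hc : 0 < c) (hd : 0 < d)
    (h : ∀ n : ℕ, 1 + (d + n)⁻¹ ≤ ((1 + (c + n)⁻¹) + (1 + (c + n + 1)⁻¹)) / 2) :
    c + 1 / 2 ≤ d := by
  by_contra! hlt
  set ε := c + 1 / 2 - d with hε_def
  have hε : 0 < ε := by linarith
  obtain ⟨n, hn⟩ := exists_nat_gt ε⁻¹
  have hle : ε ≤ (4 * (c + n) + 2)⁻¹ := by
    have := add_half_sub_le_of_le_avg (by positivity) (by positivity) (h n)
    linarith [hε_def]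
  have : (4 * (c + n) + 2)⁻¹ < ε := by
    rw [inv_lt_comm₀ (by positivity) hε]
    linarith
  linarith

theorem eq_one_of_isTwoIsometricSeq_sq {w : ℕ → ℝ} (hw : ∀ j, 0 < w j)
    (hT : IsTwoIsometricSeq fun j => w j ^ 2)
    (hM : IsTwoIsometricSeq fun j => ((w j + w (j + 1)) / 2) ^ 2) (j : ℕ) : w j = 1 := by
  rcases hT.eq_one_or_eq_one_add_inv fun j => pow_pos (hw j) 2 with hs | ⟨c, hc, hs⟩
  · exact (pow_eq_one_iff_of_nonneg (hw j).le two_ne_zero).mp (hs j)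
  exfalso
  have hs_succ (n : ℕ) : w (n + 1) ^ 2 = 1 + (c + n + 1)⁻¹ := by
    rw [hs (n + 1)]; push_cast; ring_nf
  have hw_gt (n : ℕ) : 1 < w n := by
    rw [← one_lt_sq_iff₀ (hw n).le, hs n, lt_add_iff_pos_right]
    positivity
  have hm_pos (n : ℕ) : 0 < (w n + w (n + 1)) / 2 := by linarith [hw n, hw (n + 1)]
  rcases hM.eq_one_or_eq_one_add_inv fun n => pow_pos (hm_pos n) 2 with ht | ⟨d, hd, ht⟩
  · have := (one_lt_sq_iff₀ (hm_pos 0).le).mpr (by linarith [hw_gt 0, hw_gt 1])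
    linarith [ht 0]
  have hupper : d < c + 1 / 2 := by
    refine lt_add_half_of_mul_le_sq hc hd ?_
    have hm0 := ht 0
    have hw0 := hs 0
    have hw1 := hs_succ 0
    simp only [Nat.cast_zero, add_zero, zero_add] at hm0 hw0 hw1
    rw [← hm0, ← hw0, ← hw1, ← mul_pow]
    have hamgm : w 0 * w 1 ≤ ((w 0 + w 1) / 2) ^ 2 := by
      linarith [four_mul_le_sq_add (w 0) (w 1)]
    exact pow_le_pow_left₀ (mul_pos (hw 0) (hw 1)).le hamgm 2
  have hlower : c + 1 / 2 ≤ d := by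
    refine add_half_le_of_forall_le_avg hc hd fun n => ?_
    rw [← ht n, ← hs n, ← hs_succ n]
    linarith [add_sq_le (a := w n) (b := w (n + 1))]
  linarith

/-- if a weighted shift `T` with positive weights `(a_j)` and its mean
transform `M(T)` (the weighted shift with weights `(a_j + a_{j+1})/2`) are both
`2`-isometries, then `T` is an isometry, i.e. `a_j = 1` for all `j`; in particular
`T = Δ(T) = M(T)`, where `Δ(T)` is the Aluthge transform (the weighted shift with weights
`√(a_j a_{j+1})`). -/
theorem two_isometry_with_two_isometric_mean_transform_is_isometry
    (w : ℕ → ℝ) (hw : ∀ j, 0 < w j)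
    (T D M : Ell2 →L[ℂ] Ell2)
    (hT : ∀ j, T (e j) = ((w j : ℝ) : ℂ) • e (j + 1))
    (hD : ∀ j, D (e j) = ((Real.sqrt (w j * w (j + 1)) : ℝ) : ℂ) • e (j + 1))
    (hM : ∀ j, M (e j) = (((w j + w (j + 1)) / 2 : ℝ) : ℂ) • e (j + 1))
    (h2T : IsMIsometry T 2) (h2M : IsMIsometry M 2) :
    (∀ x : Ell2, ‖T x‖ = ‖x‖) ∧ (∀ j, w j = 1) ∧ T = D ∧ T = M := by
  have hw1 : ∀ j, w j = 1 :=
    eq_one_of_isTwoIsometricSeq_sq hw (h2T.isTwoIsometricSeq_sq hT) (h2M.isTwoIsometricSeq_sq hM)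
  have hTe (j : ℕ) : T (e j) = e (j + 1) := by simp [hT, hw1]
  refine ⟨norm_map_of_apply_e_eq_e_succ hTe, hw1, ext_e fun j => ?_, ext_e fun j => ?_⟩
  · simp [hTe, hD, hw1]
  · norm_num [hTe, hM, hw1]
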